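/- (Conditional regret-capacity theorem for the α-regret.) Fix α > 1 and suppose there exists a prior probability measure w* on Θ with I_α^{w*}(θ,Y|X^n) = sup_w I_α^w(θ,Y|X^n), the supremum being over all prior probability measures w on Θ. Then the minimax batch α-regret satisfies min over batch predictors p̂ of sup_{θ∈Θ} R_α(p̂,θ) = I_α^{w*}(θ,Y|X^n), and the minimum is achieved by the conditional α-NML predictor p̂*_α(y|x^n) = ( ∫_Θ p_θ(y)^α w*(dθ|x^n) )^{1/α} / Σ_{y'} ( ∫_Θ p_θ(y')^α w*(dθ|x^n) )^{1/α}, where w*(dθ|x^n) = w*(dθ) p_θ(x^n)/∫_Θ p_{θ'}(x^n) w*(dθ') is the posterior of w* given x^n. -/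

import Mathlib

open MeasureTheory Real Filter

/-- `q` is a probability mass function on the finite type `B`. -/
def IsPMF {B : Type*} [Fintype B] (q : B → ℝ) : Prop :=
  (∀ y, 0 ≤ q y) ∧ ∑ y, q y = 1

/-- Probability of a tuple of `n` i.i.d. batches: `p_θ(x^n) = ∏ i, p_θ(x_i)`. -/
def prodP {Θ B : Type*} (p : Θ → B → ℝ) (n : ℕ) (θ : Θ) (x : Fin n → B) : ℝ :=
  ∏ i, p θ (x i)

/-- The batch `α`-regret
`R_α(p̂,θ) = (1/(α-1)) log ( Σ_{x^n} p_θ(x^n) Σ_y p_θ(y) (p_θ(y)/p̂(y|x^n))^(α-1) )`. -/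
noncomputable def alphaRegret {Θ B : Type*} [Fintype B] (α : ℝ) (p : Θ → B → ℝ) (n : ℕ)
    (phat : (Fin n → B) → B → ℝ) (θ : Θ) : ℝ :=
  (α - 1)⁻¹ * Real.log (∑ x : Fin n → B, prodP p n θ x *
    ∑ y : B, p θ y * (p θ y / phat x y) ^ (α - 1))

/-- The conditional Rényi divergence `D_α(Y ‖ Ŷ | θ, X^n)` under the joint law
`w(dθ) p_θ(x^n) p_θ(y)`. -/
noncomputable def condRenyiDiv {Θ B : Type*} [MeasurableSpace Θ] [Fintype B] (α : ℝ)
    (p : Θ → B → ℝ) (n : ℕ) (w : Measure Θ) (phat : (Fin n → B) → B → ℝ) : ℝ :=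
  (α - 1)⁻¹ * Real.log (∫ θ, (∑ x : Fin n → B, prodP p n θ x *
    ∑ y : B, p θ y * (p θ y / phat x y) ^ (α - 1)) ∂w)

/-- The conditional Sibson mutual information
`I_α^w(θ,Y|X^n) = (1/(α-1)) log Σ_{x^n} { Σ_y ( ∫ p_θ(x^n) p_θ(y)^α w(dθ) )^(1/α) }^α`. -/
noncomputable def sibsonMI {Θ B : Type*} [MeasurableSpace Θ] [Fintype B] (α : ℝ)
    (p : Θ → B → ℝ) (n : ℕ) (w : Measure Θ) : ℝ :=
  (α - 1)⁻¹ * Real.log (∑ x : Fin n → B,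
    (∑ y : B, (∫ θ, prodP p n θ x * p θ y ^ α ∂w) ^ α⁻¹) ^ α)

/-- Integral of `g` against the posterior `w(dθ|x^n) = w(dθ) p_θ(x^n) / ∫ p_θ'(x^n) w(dθ')`. -/
noncomputable def posteriorInt {Θ B : Type*} [MeasurableSpace Θ] (p : Θ → B → ℝ) (n : ℕ)
    (w : Measure Θ) (x : Fin n → B) (g : Θ → ℝ) : ℝ :=
  (∫ θ, prodP p n θ x * g θ ∂w) / (∫ θ, prodP p n θ x ∂w)

/-- The conditional `α`-NML predictor
`p̂_α(y|x^n) = ( ∫ p_θ(y)^α w(dθ|x^n) )^(1/α) / Σ_y' ( ∫ p_θ(y')^α w(dθ|x^n) )^(1/α)`. -/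
noncomputable def alphaNML {Θ B : Type*} [MeasurableSpace Θ] [Fintype B] (α : ℝ)
    (p : Θ → B → ℝ) (n : ℕ) (w : Measure Θ) (x : Fin n → B) (y : B) : ℝ :=
  (posteriorInt p n w x fun θ => p θ y ^ α) ^ α⁻¹ /
    ∑ y' : B, (posteriorInt p n w x fun θ => p θ y' ^ α) ^ α⁻¹

/-!
Put `A_w(x,y) = ∫ p_θ(x^n) p_θ(y)^α w(dθ)` and `Φ(A) = ∑ₓ (∑_y A(x,y) ^ (1/α)) ^ α`, so that
`I_α^w = log Φ(A_w) / (α - 1)`. Both `A_w` and `exp ((α - 1) R_α(p̂,θ))` are linear in the joint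
weight `p_θ(x^n) p_θ(y)^α`.

Lower bound: for a positive predictor `q`, reverse Hölder gives
`(∑_y a_y ^ (1/α)) ^ α ≤ ∑_y a_y q(y) ^ (1 - α)`; integrating the bound on the regret against `w*`
gives `Φ(A_{w*}) ≤ exp ((α - 1) C)`.

Upper bound: the α-NML predictor is the normalised gradient of `Φ` at `A_{w*}`, so by the
degree-one homogeneity of `Φ`, `exp ((α - 1) R_α)` of it at `θ` is `Φ(A_{w*})` plus the one-sided
derivative of `w ↦ Φ(A_w)` from `w*` towards `δ_θ`, which is `≤ 0` at a maximiser. As `Φ` need not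
be differentiable where `A` vanishes, that derivative is bounded through the tangent lines of the
concave `a ↦ a ^ (1/α)` and the convex `s ↦ s ^ α`, and a limit `t → 0⁺`.
-/

open Finset Topology unitInterval

theorem IsPMF.le_one {B : Type*} [Fintype B] {q : B → ℝ} (h : IsPMF q) (y : B) : q y ≤ 1 :=
  (single_le_sum (fun i _ => h.1 i) (mem_univ y)).trans_eq h.2

namespace Real

theorem rpow_le_tangent_of_le_one {r a u : ℝ} (hr0 : 0 < r) (hr1 : r ≤ 1) (ha : 0 ≤ a)
    (hu : 0 < u) : a ^ r ≤ u ^ r + r * u ^ (r - 1) * (a - u) := by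
  have h := rpow_one_add_le_one_add_mul_self
    (show -1 ≤ a / u - 1 by linarith [div_nonneg ha hu.le]) hr0.le hr1
  rw [add_sub_cancel, div_rpow ha hu.le, div_le_iff₀ (rpow_pos_of_pos hu r)] at h
  calc a ^ r ≤ (1 + r * (a / u - 1)) * u ^ r := h
    _ = u ^ r + r * u ^ (r - 1) * (a - u) := by rw [rpow_sub_one hu.ne']; field_simp

theorem tangent_le_rpow_of_one_lt {p b s : ℝ} (hp : 1 < p) (hb : 0 ≤ b) (hs : 0 ≤ s) :
    b ^ p + p * b ^ (p - 1) * (s - b) ≤ s ^ p := by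
  rcases hb.eq_or_lt with rfl | hb
  · rw [zero_rpow (by linarith), zero_rpow (by linarith)]
    simpa using rpow_nonneg hs p
  have h := one_add_mul_self_le_rpow_one_add
    (show -1 ≤ s / b - 1 by linarith [div_nonneg hs hb.le]) hp.le
  rw [add_sub_cancel, div_rpow hs hb.le, le_div_iff₀ (rpow_pos_of_pos hb p)] at h
  calc b ^ p + p * b ^ (p - 1) * (s - b) = (1 + p * (s / b - 1)) * b ^ p := by
        rw [rpow_sub_one hb.ne']; field_simp
    _ ≤ s ^ p := h

theorem rpow_sum_rpow_inv_le_sum_mul_rpow {ι : Type*} (s : Finset ι) {α : ℝ} (hα : 1 ≤ α)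
    {u l : ι → ℝ} (hu : ∀ i ∈ s, 0 ≤ u i) (hl : ∀ i ∈ s, 0 < l i) (hl1 : ∑ i ∈ s, l i = 1) :
    (∑ i ∈ s, u i ^ α⁻¹) ^ α ≤ ∑ i ∈ s, u i * l i ^ (1 - α) := by
  have hα0 : α ≠ 0 := (zero_lt_one.trans_le hα).ne'
  calc (∑ i ∈ s, u i ^ α⁻¹) ^ α = (∑ i ∈ s, l i * (u i ^ α⁻¹ / l i)) ^ α := by
        congr 1; exact sum_congr rfl fun i hi => (mul_div_cancel₀ _ (hl i hi).ne').symm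
    _ ≤ ∑ i ∈ s, l i * (u i ^ α⁻¹ / l i) ^ α :=
        rpow_arith_mean_le_arith_mean_rpow s l _ (fun i hi => (hl i hi).le) hl1
          (fun i hi => div_nonneg (rpow_nonneg (hu i hi) _) (hl i hi).le) hα
    _ = ∑ i ∈ s, u i * l i ^ (1 - α) := sum_congr rfl fun i hi => by
        rw [div_rpow (rpow_nonneg (hu i hi) _) (hl i hi).le, rpow_inv_rpow (hu i hi) hα0,
          rpow_sub (hl i hi), rpow_one]
        field_simp

theorem mul_div_rpow_sub_one {α P q : ℝ} (hα : 1 < α) (hP : 0 ≤ P) (hq : 0 ≤ q) :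
    P * (P / q) ^ (α - 1) = P ^ α * q ^ (1 - α) := by
  rcases hq.eq_or_lt with rfl | hq
  · rw [div_zero, zero_rpow (by linarith), zero_rpow (by linarith), mul_zero, mul_zero]
  rcases hP.eq_or_lt with rfl | hP
  · rw [zero_mul, zero_rpow (by linarith), zero_mul]
  rw [div_rpow hP.le hq.le, rpow_sub_one hP.ne', show 1 - α = -(α - 1) by ring, rpow_neg hq.le]
  field_simp

end Real

section SibsonSum

variable {X Y : Type*} [Fintype X] [Fintype Y] {α : ℝ}

noncomputable def sibsonSum (α : ℝ) (A : X → Y → ℝ) : ℝ :=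
  ∑ x, (∑ y, A x y ^ α⁻¹) ^ α

noncomputable def lossSum (α : ℝ) (E q : X → Y → ℝ) : ℝ :=
  ∑ x, ∑ y, E x y * q x y ^ (1 - α)

noncomputable def tilted (α : ℝ) (A : X → Y → ℝ) (x : X) (y : Y) : ℝ :=
  A x y ^ α⁻¹ / ∑ y', A x y' ^ α⁻¹

/-- With `u = A` this is the derivative of `sibsonSum α` at `A` in the direction `E`. -/
noncomputable def sibsonPairing (α : ℝ) (A u E : X → Y → ℝ) : ℝ :=
  ∑ x, (∑ y, A x y ^ α⁻¹) ^ (α - 1) * ∑ y, u x y ^ (α⁻¹ - 1) * E x y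

theorem le_sibsonSum (hα : 0 < α) {A : X → Y → ℝ} (hA : 0 ≤ A) (x : X) (y : Y) :
    A x y ≤ sibsonSum α A := by
  have hr : ∀ x y, 0 ≤ A x y ^ α⁻¹ := fun x y => rpow_nonneg (hA x y) _
  calc A x y = (A x y ^ α⁻¹) ^ α := (rpow_inv_rpow (hA x y) hα.ne').symm
    _ ≤ (∑ y', A x y' ^ α⁻¹) ^ α :=
        rpow_le_rpow (hr x y) (single_le_sum (fun y' _ => hr x y') (mem_univ y)) hα.le
    _ ≤ sibsonSum α A :=
        single_le_sum (f := fun x => (∑ y', A x y' ^ α⁻¹) ^ α)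
          (fun x' _ => rpow_nonneg (sum_nonneg fun y' _ => hr x' y') _) (mem_univ x)

theorem sibsonSum_le_lossSum (hα : 1 ≤ α) {A q : X → Y → ℝ} (hA : 0 ≤ A)
    (hq : ∀ x, IsPMF (q x)) (hq0 : ∀ x y, 0 < q x y) : sibsonSum α A ≤ lossSum α A q :=
  sum_le_sum fun x _ =>
    rpow_sum_rpow_inv_le_sum_mul_rpow _ hα (fun y _ => hA x y) (fun y _ => hq0 x y) (hq x).2

theorem lossSum_nonneg {E q : X → Y → ℝ} (hE : 0 ≤ E) (hq : 0 ≤ q) : 0 ≤ lossSum α E q :=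
  sum_nonneg fun x _ => sum_nonneg fun y _ => mul_nonneg (hE x y) (rpow_nonneg (hq x y) _)

theorem lossSum_tilted (hα : 1 < α) {A : X → Y → ℝ} (hA : 0 ≤ A) (E : X → Y → ℝ) :
    lossSum α E (tilted α A) = sibsonPairing α A A E := by
  have hr0 : 0 < α⁻¹ := inv_pos.2 (by linarith)
  have hr1 : α⁻¹ < 1 := inv_lt_one_of_one_lt₀ hα
  refine sum_congr rfl fun x _ => ?_
  rw [mul_sum]
  refine sum_congr rfl fun y _ => ?_
  rcases (show 0 ≤ A x y from hA x y).eq_or_lt with h | h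
  · rw [tilted, ← h, zero_rpow hr0.ne', zero_div, zero_rpow (by linarith),
      zero_rpow (by linarith)]
    simp
  have hB : 0 < ∑ y', A x y' ^ α⁻¹ :=
    (rpow_pos_of_pos h _).trans_le
      (single_le_sum (fun y' _ => rpow_nonneg (hA x y') _) (mem_univ y))
  rw [tilted, div_rpow (rpow_nonneg (hA x y) _) hB.le, ← rpow_mul (hA x y), div_eq_mul_inv,
    ← rpow_neg hB.le, neg_sub, mul_sub, mul_one, inv_mul_cancel₀ (by linarith)]
  ring

theorem sibsonPairing_self (hα : 1 < α) {A : X → Y → ℝ} (hA : 0 ≤ A) :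
    sibsonPairing α A A A = sibsonSum α A := by
  have hsub_mul : ∀ {a r : ℝ}, 0 ≤ a → r ≠ 0 → a ^ (r - 1) * a = a ^ r := fun ha hr => by
    rw [← rpow_add_one' ha (by simpa using hr), sub_add_cancel]
  have hr0 : α⁻¹ ≠ 0 := inv_ne_zero (by linarith)
  refine sum_congr rfl fun x _ => ?_
  rw [sum_congr rfl fun y _ => hsub_mul (hA x y) hr0,
    hsub_mul (sum_nonneg fun y _ => rpow_nonneg (hA x y) _) (by linarith)]

theorem sibsonPairing_le_rpow_mul_of_smul_le (hα : 1 < α) {A u : X → Y → ℝ} (hA : 0 ≤ A)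
    {c : ℝ} (hc : 0 < c) (hcu : c • A ≤ u) :
    sibsonPairing α A u A ≤ c ^ (α⁻¹ - 1) * sibsonPairing α A A A := by
  have hr : α⁻¹ - 1 < 0 := sub_neg.2 (inv_lt_one_of_one_lt₀ hα)
  rw [sibsonPairing, sibsonPairing, mul_sum]
  refine sum_le_sum fun x _ => ?_
  have hterm : ∀ y, u x y ^ (α⁻¹ - 1) * A x y ≤ c ^ (α⁻¹ - 1) * (A x y ^ (α⁻¹ - 1) * A x y) := by
    intro y
    rcases (show 0 ≤ A x y from hA x y).eq_or_lt with h | h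
    · simp [← h]
    calc u x y ^ (α⁻¹ - 1) * A x y ≤ (c * A x y) ^ (α⁻¹ - 1) * A x y :=
          mul_le_mul_of_nonneg_right (rpow_le_rpow_of_nonpos (mul_pos hc h) (hcu x y) hr.le) h.le
      _ = c ^ (α⁻¹ - 1) * (A x y ^ (α⁻¹ - 1) * A x y) := by rw [mul_rpow hc.le h.le, mul_assoc]
  calc (∑ y, A x y ^ α⁻¹) ^ (α - 1) * ∑ y, u x y ^ (α⁻¹ - 1) * A x y
      ≤ (∑ y, A x y ^ α⁻¹) ^ (α - 1) * ∑ y, c ^ (α⁻¹ - 1) * (A x y ^ (α⁻¹ - 1) * A x y) :=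
        mul_le_mul_of_nonneg_left (sum_le_sum fun y _ => hterm y)
          (rpow_nonneg (sum_nonneg fun y _ => rpow_nonneg (hA x y) _) _)
    _ = _ := by rw [← mul_sum]; ring

theorem sibsonSum_add_sibsonPairing_sub_le (hα : 1 < α) {A u : X → Y → ℝ} (hA : 0 ≤ A)
    (hu : 0 ≤ u) (hAu : ∀ x y, u x y = 0 → A x y = 0) :
    sibsonSum α A + sibsonPairing α A u (u - A) ≤ sibsonSum α u := by
  have hr0 : 0 < α⁻¹ := inv_pos.2 (by linarith)
  rw [sibsonSum, sibsonSum, sibsonPairing, ← sum_add_distrib]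
  refine sum_le_sum fun x _ => ?_
  set b := ∑ y, A x y ^ α⁻¹
  set s := ∑ y, u x y ^ α⁻¹
  have hinner : b + α⁻¹ * ∑ y, u x y ^ (α⁻¹ - 1) * (u - A) x y ≤ s := by
    rw [mul_sum, ← sum_add_distrib]
    refine sum_le_sum fun y _ => ?_
    rcases (show 0 ≤ u x y from hu x y).eq_or_lt with h | h
    · simp [← h, hAu x y h.symm, zero_rpow hr0.ne']
    · have := rpow_le_tangent_of_le_one hr0 (inv_le_one_of_one_le₀ hα.le) (hA x y) h
      simp only [Pi.sub_apply]
      linarith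
  have hb : 0 ≤ b := sum_nonneg fun y _ => rpow_nonneg (hA x y) _
  have hs : 0 ≤ s := sum_nonneg fun y _ => rpow_nonneg (hu x y) _
  calc b ^ α + b ^ (α - 1) * ∑ y, u x y ^ (α⁻¹ - 1) * (u - A) x y
      = b ^ α + α * b ^ (α - 1) * (α⁻¹ * ∑ y, u x y ^ (α⁻¹ - 1) * (u - A) x y) := by
        field_simp
    _ ≤ b ^ α + α * b ^ (α - 1) * (s - b) := by gcongr; linarith
    _ ≤ s ^ α := tangent_le_rpow_of_one_lt hα hb hs

theorem sibsonPairing_mix_le (hα : 1 < α) {A E : X → Y → ℝ} (hA : 0 ≤ A) (hE : 0 ≤ E) {t : ℝ}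
    (ht0 : 0 < t) (ht1 : t < 1) (hmax : sibsonSum α ((1 - t) • A + t • E) ≤ sibsonSum α A) :
    sibsonPairing α A ((1 - t) • A + t • E) E ≤ (1 - t) ^ (α⁻¹ - 1) * sibsonSum α A := by
  set u := (1 - t) • A + t • E with hu_def
  have hAu : (1 - t) • A ≤ u := le_add_of_nonneg_right (smul_nonneg ht0.le hE)
  have hu : 0 ≤ u := (smul_nonneg (sub_nonneg.2 ht1.le) hA).trans hAu
  have htan := sibsonSum_add_sibsonPairing_sub_le hα hA hu fun x y h => by
    have := hAu x y
    simp only [Pi.smul_apply, smul_eq_mul, h] at this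
    nlinarith [hA x y, mul_nonneg (sub_nonneg.2 ht1.le) (hA x y)]
  have hlin : sibsonPairing α A u (u - A)
      = t * (sibsonPairing α A u E - sibsonPairing α A u A) := by
    simp only [sibsonPairing, mul_sum, ← sum_sub_distrib]
    refine sum_congr rfl fun x _ => sum_congr rfl fun y _ => ?_
    simp only [hu_def, Pi.add_apply, Pi.sub_apply, Pi.smul_apply, smul_eq_mul]
    ring
  calc sibsonPairing α A u E ≤ sibsonPairing α A u A := by nlinarith
    _ ≤ (1 - t) ^ (α⁻¹ - 1) * sibsonPairing α A A A :=
        sibsonPairing_le_rpow_mul_of_smul_le hα hA (sub_pos.2 ht1) hAu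
    _ = (1 - t) ^ (α⁻¹ - 1) * sibsonSum α A := by rw [sibsonPairing_self hα hA]

theorem sibsonPairing_le_sibsonSum_of_forall_mix_le (hα : 1 < α) {A E : X → Y → ℝ}
    (hA : 0 ≤ A) (hE : 0 ≤ E)
    (hmax : ∀ t ∈ Set.Ioo (0 : ℝ) 1, sibsonSum α ((1 - t) • A + t • E) ≤ sibsonSum α A) :
    sibsonPairing α A A E ≤ sibsonSum α A := by
  have hr : α⁻¹ - 1 < 0 := sub_neg.2 (inv_lt_one_of_one_lt₀ hα)
  -- Terms with `A x y = 0` are dropped (they vanish in the pairing since `0 ^ (α⁻¹ - 1) = 0`);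
  -- the remaining ones are continuous at `t = 0`.
  set lower : ℝ → ℝ := fun t => ∑ x, (∑ y, A x y ^ α⁻¹) ^ (α - 1) *
    ∑ y, if 0 < A x y then ((1 - t) * A x y + t * E x y) ^ (α⁻¹ - 1) * E x y else 0
  have hbound : ∀ t ∈ Set.Ioo (0 : ℝ) 1, lower t ≤ (1 - t) ^ (α⁻¹ - 1) * sibsonSum α A := by
    refine fun t ht => le_trans ?_ (sibsonPairing_mix_le hα hA hE ht.1 ht.2 (hmax t ht))
    refine sum_le_sum fun x _ => mul_le_mul_of_nonneg_left (sum_le_sum fun y _ => ?_)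
      (rpow_nonneg (sum_nonneg fun y _ => rpow_nonneg (hA x y) _) _)
    split_ifs
    · rfl
    · exact mul_nonneg (rpow_nonneg (add_nonneg (mul_nonneg (sub_nonneg.2 ht.2.le) (hA x y))
        (mul_nonneg ht.1.le (hE x y))) _) (hE x y)
  have hlim_lower : Tendsto lower (𝓝 0) (𝓝 (sibsonPairing α A A E)) := by
    refine tendsto_finsetSum _ fun x _ => (tendsto_finsetSum _ fun y _ => ?_).const_mul _
    split_ifs with h
    · have hcont : ContinuousAt
          (fun t : ℝ => ((1 - t) * A x y + t * E x y) ^ (α⁻¹ - 1) * E x y) 0 :=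
        (ContinuousAt.rpow_const (by fun_prop) (Or.inl (by simpa using h.ne'))).mul
          continuousAt_const
      simpa using hcont.tendsto
    · rw [(not_lt.1 h).antisymm (hA x y), zero_rpow hr.ne, zero_mul]
      exact tendsto_const_nhds
  have hlim_upper : Tendsto (fun t : ℝ => (1 - t) ^ (α⁻¹ - 1) * sibsonSum α A) (𝓝 0)
      (𝓝 (sibsonSum α A)) := by
    have hcont : ContinuousAt (fun t : ℝ => (1 - t) ^ (α⁻¹ - 1) * sibsonSum α A) 0 :=
      (ContinuousAt.rpow_const (by fun_prop) (Or.inl (by simp))).mul continuousAt_const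
    simpa using hcont.tendsto
  exact le_of_tendsto_of_tendsto (hlim_lower.mono_left nhdsWithin_le_nhds)
    (hlim_upper.mono_left nhdsWithin_le_nhds)
    (eventually_of_mem (Ioo_mem_nhdsGT zero_lt_one) hbound)

end SibsonSum

theorem prodP_nonneg {Θ B : Type*} [Fintype B] {p : Θ → B → ℝ} (hp : ∀ θ, IsPMF (p θ))
    {n : ℕ} (θ : Θ) (x : Fin n → B) : 0 ≤ prodP p n θ x :=
  prod_nonneg fun _ _ => (hp θ).1 _

theorem prodP_le_one {Θ B : Type*} [Fintype B] {p : Θ → B → ℝ} (hp : ∀ θ, IsPMF (p θ))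
    {n : ℕ} (θ : Θ) (x : Fin n → B) : prodP p n θ x ≤ 1 :=
  prod_le_one (fun _ _ => (hp θ).1 _) fun _ _ => (hp θ).le_one _

theorem sum_prodP {Θ B : Type*} [Fintype B] {p : Θ → B → ℝ} (hp : ∀ θ, IsPMF (p θ)) (n : ℕ)
    (θ : Θ) : ∑ x : Fin n → B, prodP p n θ x = 1 := by
  simp [prodP, ← Fintype.piFinset_univ, sum_prod_piFinset, (hp θ).2]

theorem measurable_prodP {Θ B : Type*} [MeasurableSpace Θ] {p : Θ → B → ℝ}
    (hmeas : ∀ y, Measurable fun θ => p θ y) {n : ℕ} (x : Fin n → B) :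
    Measurable fun θ => prodP p n θ x :=
  Finset.measurable_prod _ fun i _ => hmeas (x i)

noncomputable def jointWeight {Θ B : Type*} (α : ℝ) (p : Θ → B → ℝ) (n : ℕ) (θ : Θ)
    (x : Fin n → B) (y : B) : ℝ :=
  prodP p n θ x * p θ y ^ α

noncomputable def sibsonKernel {Θ B : Type*} [MeasurableSpace Θ] (α : ℝ) (p : Θ → B → ℝ)
    (n : ℕ) (w : Measure Θ) (x : Fin n → B) (y : B) : ℝ :=
  ∫ θ, jointWeight α p n θ x y ∂w

section JointWeight

variable {Θ B : Type*} [Fintype B] {α : ℝ} {p : Θ → B → ℝ} {n : ℕ}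

theorem jointWeight_nonneg (hp : ∀ θ, IsPMF (p θ)) (θ : Θ) : 0 ≤ jointWeight α p n θ :=
  fun x y => mul_nonneg (prodP_nonneg hp θ x) (rpow_nonneg ((hp θ).1 y) α)

theorem jointWeight_le_prodP (hα : 0 ≤ α) (hp : ∀ θ, IsPMF (p θ)) (θ : Θ) (x : Fin n → B)
    (y : B) : jointWeight α p n θ x y ≤ prodP p n θ x :=
  mul_le_of_le_one_right (prodP_nonneg hp θ x) (rpow_le_one ((hp θ).1 y) ((hp θ).le_one y) hα)

theorem sibsonSum_jointWeight (hα : 0 < α) (hp : ∀ θ, IsPMF (p θ)) (θ : Θ) :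
    sibsonSum α (jointWeight α p n θ) = 1 := by
  have hterm : ∀ x y, jointWeight α p n θ x y ^ α⁻¹ = prodP p n θ x ^ α⁻¹ * p θ y := by
    intro x y
    rw [jointWeight, mul_rpow (prodP_nonneg hp θ x) (rpow_nonneg ((hp θ).1 y) α),
      rpow_rpow_inv ((hp θ).1 y) hα.ne']
  simp only [sibsonSum, hterm, ← mul_sum, (hp θ).2, mul_one,
    rpow_inv_rpow (prodP_nonneg hp θ _) hα.ne', sum_prodP hp n θ]

theorem alphaRegret_eq_log_lossSum (hα : 1 < α) (hp : ∀ θ, IsPMF (p θ))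
    {q : (Fin n → B) → B → ℝ} (hq : 0 ≤ q) (θ : Θ) :
    alphaRegret α p n q θ = (α - 1)⁻¹ * log (lossSum α (jointWeight α p n θ) q) := by
  simp only [alphaRegret, lossSum, jointWeight, mul_sum, mul_assoc,
    mul_div_rpow_sub_one hα ((hp θ).1 _) (hq _ _)]

end JointWeight

theorem measurable_jointWeight {Θ B : Type*} [MeasurableSpace Θ] {α : ℝ} {p : Θ → B → ℝ}
    (hmeas : ∀ y, Measurable fun θ => p θ y) {n : ℕ} (x : Fin n → B) (y : B) :
    Measurable fun θ => jointWeight α p n θ x y :=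
  (measurable_prodP hmeas x).mul ((hmeas y).pow_const α)

theorem sibsonKernel_dirac {Θ B : Type*} [MeasurableSpace Θ] {α : ℝ} {p : Θ → B → ℝ}
    (hmeas : ∀ y, Measurable fun θ => p θ y) {n : ℕ} (θ : Θ) :
    sibsonKernel α p n (Measure.dirac θ) = jointWeight α p n θ :=
  funext₂ fun x y => integral_dirac' _ θ (measurable_jointWeight hmeas x y).stronglyMeasurable

section SourceClass

variable {Θ B : Type*} [MeasurableSpace Θ] [Fintype B] {α : ℝ} {p : Θ → B → ℝ} {n : ℕ}
  {w : Measure Θ}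

theorem sibsonMI_eq_log_sibsonSum :
    sibsonMI α p n w = (α - 1)⁻¹ * log (sibsonSum α (sibsonKernel α p n w)) :=
  rfl

theorem integrable_prodP [IsFiniteMeasure w] (hp : ∀ θ, IsPMF (p θ))
    (hmeas : ∀ y, Measurable fun θ => p θ y) (x : Fin n → B) :
    Integrable (fun θ => prodP p n θ x) w :=
  .of_bound (measurable_prodP hmeas x).aestronglyMeasurable 1 <| ae_of_all _ fun θ => by
    rw [norm_of_nonneg (prodP_nonneg hp θ x)]
    exact prodP_le_one hp θ x

theorem integrable_jointWeight [IsFiniteMeasure w] (hα : 0 ≤ α) (hp : ∀ θ, IsPMF (p θ))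
    (hmeas : ∀ y, Measurable fun θ => p θ y) (x : Fin n → B) (y : B) :
    Integrable (fun θ => jointWeight α p n θ x y) w :=
  (integrable_prodP hp hmeas x).mono' (measurable_jointWeight hmeas x y).aestronglyMeasurable <|
    ae_of_all _ fun θ => by
      rw [norm_of_nonneg (jointWeight_nonneg hp θ x y)]
      exact jointWeight_le_prodP hα hp θ x y

theorem sibsonKernel_nonneg (hp : ∀ θ, IsPMF (p θ)) : 0 ≤ sibsonKernel α p n w :=
  fun x y => integral_nonneg fun θ => jointWeight_nonneg hp θ x y

theorem sibsonMI_dirac (hα : 0 < α) (hp : ∀ θ, IsPMF (p θ))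
    (hmeas : ∀ y, Measurable fun θ => p θ y) (θ : Θ) : sibsonMI α p n (Measure.dirac θ) = 0 := by
  rw [sibsonMI_eq_log_sibsonSum, sibsonKernel_dirac hmeas, sibsonSum_jointWeight hα hp, log_one,
    mul_zero]

theorem sibsonKernel_mix [IsFiniteMeasure w] (hα : 0 ≤ α) (hp : ∀ θ, IsPMF (p θ))
    (hmeas : ∀ y, Measurable fun θ => p θ y) (θ : Θ) (t : I) :
    sibsonKernel α p n
        (unitInterval.toNNReal t • Measure.dirac θ + unitInterval.toNNReal (σ t) • w)
      = (1 - (t : ℝ)) • sibsonKernel α p n w + (t : ℝ) • jointWeight α p n θ := by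
  funext x y
  rw [sibsonKernel, integral_add_measure, integral_smul_nnreal_measure,
    integral_smul_nnreal_measure,
    integral_dirac' _ θ (measurable_jointWeight hmeas x y).stronglyMeasurable]
  · simp [sibsonKernel, NNReal.smul_def, add_comm]
  · exact (integrable_jointWeight hα hp hmeas x y).smul_measure_nnreal
  · exact (integrable_jointWeight hα hp hmeas x y).smul_measure_nnreal

theorem integrable_sum_sum_jointWeight_mul [IsFiniteMeasure w] (hα : 0 ≤ α)
    (hp : ∀ θ, IsPMF (p θ)) (hmeas : ∀ y, Measurable fun θ => p θ y)
    (c : (Fin n → B) → B → ℝ) :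
    Integrable (fun θ => ∑ x, ∑ y, jointWeight α p n θ x y * c x y) w :=
  integrable_finsetSum _ fun x _ => integrable_finsetSum _ fun y _ =>
    (integrable_jointWeight hα hp hmeas x y).mul_const _

theorem integral_sum_sum_jointWeight_mul [IsFiniteMeasure w] (hα : 0 ≤ α)
    (hp : ∀ θ, IsPMF (p θ)) (hmeas : ∀ y, Measurable fun θ => p θ y)
    (c : (Fin n → B) → B → ℝ) :
    ∫ θ, ∑ x, ∑ y, jointWeight α p n θ x y * c x y ∂w
      = ∑ x, ∑ y, sibsonKernel α p n w x y * c x y := by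
  have hint := fun x y => (integrable_jointWeight (w := w) hα hp hmeas x y).mul_const (c x y)
  rw [integral_finsetSum _ fun x _ => integrable_finsetSum _ fun y _ => hint x y]
  refine sum_congr rfl fun x _ => ?_
  rw [integral_finsetSum _ fun y _ => hint x y]
  exact sum_congr rfl fun y _ => integral_mul_const _ _

theorem sibsonSum_sibsonKernel_pos [IsProbabilityMeasure w] (hα : 0 < α)
    (hp : ∀ θ, IsPMF (p θ)) (hmeas : ∀ y, Measurable fun θ => p θ y) :
    0 < sibsonSum α (sibsonKernel α p n w) := by
  have hmass : ∀ θ, 0 < ∑ x, ∑ y, jointWeight α p n θ x y * 1 := fun θ => by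
    obtain ⟨y, -, hy⟩ := exists_ne_zero_of_sum_ne_zero ((hp θ).2.trans_ne one_ne_zero)
    have hy : 0 < p θ y := ((hp θ).1 y).lt_of_ne' hy
    simp only [jointWeight, mul_one]
    rw [sum_comm]
    simp only [← sum_mul, sum_prodP hp n θ, one_mul]
    exact (rpow_pos_of_pos hy α).trans_le
      (single_le_sum (fun y' _ => rpow_nonneg ((hp θ).1 y') α) (mem_univ y))
  have hint : Integrable (fun θ => ∑ x, ∑ y, jointWeight α p n θ x y * 1) w :=
    integrable_sum_sum_jointWeight_mul hα.le hp hmeas fun _ _ => 1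
  have htotal : 0 < ∑ x, ∑ y, sibsonKernel α p n w x y * 1 := by
    rw [← integral_sum_sum_jointWeight_mul hα.le hp hmeas fun _ _ => 1,
      integral_pos_iff_support_of_nonneg (fun θ => (hmass θ).le) hint,
      Function.support_eq_univ fun θ => (hmass θ).ne', measure_univ]
    exact one_pos
  obtain ⟨x, -, hx⟩ := exists_ne_zero_of_sum_ne_zero htotal.ne'
  obtain ⟨y, -, hy⟩ := exists_ne_zero_of_sum_ne_zero hx
  rw [mul_one] at hy
  exact ((sibsonKernel_nonneg hp x y).lt_of_ne' hy).trans_le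
    (le_sibsonSum hα (sibsonKernel_nonneg hp) x y)

theorem sibsonMI_le_sibsonMI_iff (hα : 1 < α) (hp : ∀ θ, IsPMF (p θ))
    (hmeas : ∀ y, Measurable fun θ => p θ y) {v : Measure Θ} [IsProbabilityMeasure v]
    [IsProbabilityMeasure w] :
    sibsonMI α p n v ≤ sibsonMI α p n w
      ↔ sibsonSum α (sibsonKernel α p n v) ≤ sibsonSum α (sibsonKernel α p n w) := by
  rw [sibsonMI_eq_log_sibsonSum, sibsonMI_eq_log_sibsonSum,
    mul_le_mul_iff_right₀ (inv_pos.2 (sub_pos.2 hα)),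
    log_le_log_iff (sibsonSum_sibsonKernel_pos (by linarith) hp hmeas)
      (sibsonSum_sibsonKernel_pos (by linarith) hp hmeas)]

theorem alphaNML_eq_tilted [IsFiniteMeasure w] (hα : 0 ≤ α) (hp : ∀ θ, IsPMF (p θ))
    (hmeas : ∀ y, Measurable fun θ => p θ y) :
    alphaNML α p n w = tilted α (sibsonKernel α p n w) := by
  funext x y
  have hpost : ∀ y, posteriorInt p n w x (fun θ => p θ y ^ α)
      = sibsonKernel α p n w x y / ∫ θ, prodP p n θ x ∂w := fun _ => rfl
  simp only [alphaNML, tilted, hpost]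
  rcases (integral_nonneg fun θ => prodP_nonneg hp θ x : 0 ≤ ∫ θ, prodP p n θ x ∂w).eq_or_lt
    with hm | hm
  · have h0 : ∀ y, sibsonKernel α p n w x y = 0 := fun y =>
      le_antisymm ((integral_mono (integrable_jointWeight hα hp hmeas x y)
        (integrable_prodP hp hmeas x) fun θ => jointWeight_le_prodP hα hp θ x y).trans_eq hm.symm)
        (sibsonKernel_nonneg hp x y)
    simp [h0, ← hm]
  · simp only [div_rpow (sibsonKernel_nonneg hp x _) hm.le, ← sum_div]
    exact div_div_div_cancel_right₀ (rpow_pos_of_pos hm _).ne' _ _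

theorem sibsonMI_le_of_forall_alphaRegret_le [IsProbabilityMeasure w] (hα : 1 < α)
    (hp : ∀ θ, IsPMF (p θ)) (hmeas : ∀ y, Measurable fun θ => p θ y)
    {q : (Fin n → B) → B → ℝ} (hq : ∀ x, IsPMF (q x)) (hq0 : ∀ x y, 0 < q x y) {C : ℝ}
    (hC : ∀ θ, alphaRegret α p n q θ ≤ C) : sibsonMI α p n w ≤ C := by
  have hα0 : 0 < α := by linarith
  have hα1 : 0 < α - 1 := sub_pos.2 hα
  have hloss : ∀ θ, lossSum α (jointWeight α p n θ) q ≤ exp ((α - 1) * C) := fun θ => by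
    have h := hC θ
    rw [alphaRegret_eq_log_lossSum hα hp (fun x y => (hq0 x y).le), inv_mul_le_iff₀ hα1] at h
    exact (le_exp_log _).trans (exp_le_exp.2 h)
  have hF : sibsonSum α (sibsonKernel α p n w) ≤ exp ((α - 1) * C) :=
    calc sibsonSum α (sibsonKernel α p n w)
        ≤ lossSum α (sibsonKernel α p n w) q :=
          sibsonSum_le_lossSum hα.le (sibsonKernel_nonneg hp) hq hq0
      _ = ∫ θ, lossSum α (jointWeight α p n θ) q ∂w :=
          (integral_sum_sum_jointWeight_mul hα0.le hp hmeas _).symm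
      _ ≤ ∫ _, exp ((α - 1) * C) ∂w :=
          integral_mono (integrable_sum_sum_jointWeight_mul hα0.le hp hmeas _)
            (integrable_const _) hloss
      _ = exp ((α - 1) * C) := by simp
  rw [sibsonMI_eq_log_sibsonSum, inv_mul_le_iff₀ hα1]
  exact (log_le_iff_le_exp (sibsonSum_sibsonKernel_pos hα0 hp hmeas)).2 hF

theorem alphaRegret_alphaNML_le_sibsonMI [IsProbabilityMeasure w] (hα : 1 < α)
    (hp : ∀ θ, IsPMF (p θ)) (hmeas : ∀ y, Measurable fun θ => p θ y)
    (hopt : ∀ v : Measure Θ, IsProbabilityMeasure v → sibsonMI α p n v ≤ sibsonMI α p n w)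
    (θ : Θ) : alphaRegret α p n (alphaNML α p n w) θ ≤ sibsonMI α p n w := by
  have hα0 : 0 < α := by linarith
  set A := sibsonKernel α p n w
  have hA : 0 ≤ A := sibsonKernel_nonneg hp
  have hgrad : lossSum α (jointWeight α p n θ) (tilted α A) ≤ sibsonSum α A := by
    rw [lossSum_tilted hα hA]
    refine sibsonPairing_le_sibsonSum_of_forall_mix_le hα hA (jointWeight_nonneg hp θ)
      fun t ht => ?_
    rw [← sibsonKernel_mix hα0.le hp hmeas θ ⟨t, ht.1.le, ht.2.le⟩]
    exact (sibsonMI_le_sibsonMI_iff hα hp hmeas).1 (hopt _ inferInstance)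
  have htilted : 0 ≤ tilted α A := fun x y =>
    div_nonneg (rpow_nonneg (hA x y) _) (sum_nonneg fun y' _ => rpow_nonneg (hA x y') _)
  rw [alphaNML_eq_tilted hα0.le hp hmeas, alphaRegret_eq_log_lossSum hα hp htilted]
  rcases (lossSum_nonneg (jointWeight_nonneg hp θ) htilted).eq_or_lt with h0 | hpos
  · -- `log 0 = 0`, which is also the Sibson information of the prior `δ_θ`
    rw [← h0, log_zero, mul_zero, ← sibsonMI_dirac hα0 hp hmeas θ]
    exact hopt _ inferInstance
  · exact mul_le_mul_of_nonneg_left (log_le_log hpos hgrad) (inv_nonneg.2 (by linarith))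

end SourceClass

theorem conditional_regret_capacity_alpha_general
    {𝒳 Θ : Type*} [Fintype 𝒳] [MeasurableSpace Θ]
    (ℓ n : ℕ) (α : ℝ) (hα : 1 < α)
    (p : Θ → (Fin ℓ → 𝒳) → ℝ)
    (hp : ∀ θ, IsPMF (p θ))
    (hmeas : ∀ z : Fin ℓ → 𝒳, Measurable fun θ => p θ z)
    (wstar : Measure Θ) [IsProbabilityMeasure wstar]
    (hopt : ∀ w : Measure Θ, IsProbabilityMeasure w →
      sibsonMI α p n w ≤ sibsonMI α p n wstar) :
    (∀ θ : Θ, alphaRegret α p n (alphaNML α p n wstar) θ ≤ sibsonMI α p n wstar)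
    ∧ (∀ phat : (Fin n → Fin ℓ → 𝒳) → (Fin ℓ → 𝒳) → ℝ,
        (∀ x, IsPMF (phat x)) → (∀ x y, 0 < phat x y) →
        ∀ C : ℝ, (∀ θ : Θ, alphaRegret α p n phat θ ≤ C) →
          sibsonMI α p n wstar ≤ C) :=
  ⟨alphaRegret_alphaNML_le_sibsonMI hα hp hmeas hopt,
    fun _ hq hq0 _ hC => sibsonMI_le_of_forall_alphaRegret_le hα hp hmeas hq hq0 hC⟩

/-- **Conditional regret-capacity theorem for the `α`-regret.**
For `α > 1`, if a prior probability measure `w*` attains `sup_w I_α^w(θ,Y|X^n)`, then the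
minimax batch `α`-regret equals `I_α^{w*}(θ,Y|X^n)` and is achieved by the conditional
`α`-NML predictor `p̂*_α` of `w*`:
(i) `R_α(p̂*_α,θ) ≤ I_α^{w*}` for all `θ` (so `sup_θ R_α(p̂*_α,θ) ≤ I_α^{w*}`), and
(ii) for every (everywhere positive) batch predictor `p̂`, any upper bound `C` of
`θ ↦ R_α(p̂,θ)` satisfies `C ≥ I_α^{w*}` (so `sup_θ R_α(p̂,θ) ≥ I_α^{w*}`). -/
theorem conditional_regret_capacity_alpha
    {𝒳 Θ : Type*} [Fintype 𝒳] [Nonempty 𝒳] [MeasurableSpace Θ]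
    (ℓ n : ℕ) (hℓ : 0 < ℓ) (hn : 0 < n) (α : ℝ) (hα : 1 < α)
    (p : Θ → (Fin ℓ → 𝒳) → ℝ)
    (hp : ∀ θ, IsPMF (p θ))
    (hmeas : ∀ z : Fin ℓ → 𝒳, Measurable fun θ => p θ z)
    (wstar : Measure Θ) [IsProbabilityMeasure wstar]
    (hopt : ∀ w : Measure Θ, IsProbabilityMeasure w →
      sibsonMI α p n w ≤ sibsonMI α p n wstar) :
    (∀ θ : Θ, alphaRegret α p n (alphaNML α p n wstar) θ ≤ sibsonMI α p n wstar)
    ∧ (∀ phat : (Fin n → Fin ℓ → 𝒳) → (Fin ℓ → 𝒳) → ℝ,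
        (∀ x, IsPMF (phat x)) → (∀ x y, 0 < phat x y) →
        ∀ C : ℝ, (∀ θ : Θ, alphaRegret α p n phat θ ≤ C) →
          sibsonMI α p n wstar ≤ C) :=
  conditional_regret_capacity_alpha_general ℓ n α hα p hp hmeas wstar hopt
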